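/- arXiv:1410.7317 — 2 statements merged into one kernel-verified Lean document; each statement's English description precedes it below -/
import Mathlib

section
/- The function g(t) := leb(A_t ∩ A) is convex on [0,∞); moreover, if d is strictly increasing (d(s₁) < d(s₂) for all s₁ < s₂ ≤ 0), then g is strictly convex on [0,∞). -/
open MeasureTheory Set Filter

/-! For `t ≥ 0`, monotonicity of `d` gives `A_t ∩ A = {s ≤ 0, b ≤ x < d (s - t)}`, a translate of
the part of `A` over `s ≤ -t`. Hence `g t = ∫_{s ≤ -t} (d s - b) = g 0 + ∫_0^t (b - d (-u)) du`, and
the integrand `u ↦ b - d (-u)` is (strictly) increasing on `[0, ∞)`. The integral of an increasing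
function is convex because its slopes over adjacent intervals are separated by the value at the
common endpoint; strict monotonicity makes one of these two comparisons strict. -/

section MonotoneIntegral

variable {g : ℝ → ℝ} {x y : ℝ}

theorem MonotoneOn.intervalIntegral_le_mul_sub (hg : MonotoneOn g (Icc x y)) (hxy : x ≤ y) :
    ∫ u in x..y, g u ≤ g y * (y - x) := by
  have hint : IntervalIntegrable g volume x y := (uIcc_of_le hxy ▸ hg).intervalIntegrable
  calc ∫ u in x..y, g u ≤ ∫ _ in x..y, g y :=
        intervalIntegral.integral_mono_on hxy hint intervalIntegrable_const
          fun u hu => hg hu (right_mem_Icc.2 hxy) hu.2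
    _ = g y * (y - x) := by simp [mul_comm]

theorem MonotoneOn.mul_sub_le_intervalIntegral (hg : MonotoneOn g (Icc x y)) (hxy : x ≤ y) :
    g x * (y - x) ≤ ∫ u in x..y, g u := by
  have hint : IntervalIntegrable g volume x y := (uIcc_of_le hxy ▸ hg).intervalIntegrable
  calc g x * (y - x) = ∫ _ in x..y, g x := by simp [mul_comm]
    _ ≤ ∫ u in x..y, g u :=
        intervalIntegral.integral_mono_on hxy intervalIntegrable_const hint
          fun u hu => hg (left_mem_Icc.2 hxy) hu hu.1

theorem StrictMonoOn.intervalIntegral_lt_mul_sub (hg : StrictMonoOn g (Icc x y)) (hxy : x < y) :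
    ∫ u in x..y, g u < g y * (y - x) := by
  have hint : IntervalIntegrable g volume x y :=
    (uIcc_of_le hxy.le ▸ hg.monotoneOn).intervalIntegrable
  have hpos : 0 < ∫ u in x..y, (g y - g u) :=
    intervalIntegral.intervalIntegral_pos_of_pos_on (intervalIntegrable_const.sub hint)
      (fun u hu => sub_pos.2 (hg (Ioo_subset_Icc_self hu) (right_mem_Icc.2 hxy.le) hu.2)) hxy
  rw [intervalIntegral.integral_sub intervalIntegrable_const hint] at hpos
  simpa [mul_comm] using hpos

variable {s : Set ℝ} {c : ℝ}

theorem MonotoneOn.intervalIntegral_sub_intervalIntegral (hs : s.OrdConnected)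
    (hg : MonotoneOn g s) (hc : c ∈ s) (hx : x ∈ s) (hy : y ∈ s) :
    (∫ u in c..y, g u) - ∫ u in c..x, g u = ∫ u in x..y, g u :=
  intervalIntegral.integral_interval_sub_left
    (hg.mono (hs.uIcc_subset hc hy)).intervalIntegrable
    (hg.mono (hs.uIcc_subset hc hx)).intervalIntegrable

theorem MonotoneOn.convexOn_intervalIntegral (hs : s.OrdConnected) (hg : MonotoneOn g s)
    (hc : c ∈ s) : ConvexOn ℝ s (fun t => ∫ u in c..t, g u) := by
  refine convexOn_of_slope_mono_adjacent hs.convex fun {x y z} hx hz hxy hyz => ?_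
  have hy : y ∈ s := hs.out hx hz ⟨hxy.le, hyz.le⟩
  rw [hg.intervalIntegral_sub_intervalIntegral hs hc hx hy,
    hg.intervalIntegral_sub_intervalIntegral hs hc hy hz]
  calc (∫ u in x..y, g u) / (y - x) ≤ g y := by
        rw [div_le_iff₀ (sub_pos.2 hxy)]
        exact (hg.mono (hs.out hx hy)).intervalIntegral_le_mul_sub hxy.le
    _ ≤ (∫ u in y..z, g u) / (z - y) := by
        rw [le_div_iff₀ (sub_pos.2 hyz)]
        exact (hg.mono (hs.out hy hz)).mul_sub_le_intervalIntegral hyz.le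

theorem StrictMonoOn.strictConvexOn_intervalIntegral (hs : s.OrdConnected)
    (hg : StrictMonoOn g s) (hc : c ∈ s) : StrictConvexOn ℝ s (fun t => ∫ u in c..t, g u) := by
  refine strictConvexOn_of_slope_strict_mono_adjacent hs.convex fun {x y z} hx hz hxy hyz => ?_
  have hy : y ∈ s := hs.out hx hz ⟨hxy.le, hyz.le⟩
  rw [hg.monotoneOn.intervalIntegral_sub_intervalIntegral hs hc hx hy,
    hg.monotoneOn.intervalIntegral_sub_intervalIntegral hs hc hy hz]
  calc (∫ u in x..y, g u) / (y - x) < g y := by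
        rw [div_lt_iff₀ (sub_pos.2 hxy)]
        exact (hg.mono (hs.out hx hy)).intervalIntegral_lt_mul_sub hxy
    _ ≤ (∫ u in y..z, g u) / (z - y) := by
        rw [le_div_iff₀ (sub_pos.2 hyz)]
        exact (hg.monotoneOn.mono (hs.out hy hz)).mul_sub_le_intervalIntegral hyz.le

end MonotoneIntegral

theorem setIntegral_Iic_neg_eq_sub {f : ℝ → ℝ} (hf : IntegrableOn f (Iic 0)) {t : ℝ} (ht : 0 ≤ t) :
    ∫ u in Iic (-t), f u = (∫ u in Iic 0, f u) - ∫ u in 0..t, f (-u) := by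
  rw [intervalIntegral.integral_comp_neg, neg_zero,
    ← intervalIntegral.integral_Iic_sub_Iic (hf.mono_set (Iic_subset_Iic.2 (by linarith))) hf,
    sub_sub_cancel]

theorem volume_setOf_snd_mem_le_fst_lt {s : Set ℝ} (hs : MeasurableSet s) {f : ℝ → ℝ}
    (hf : AEMeasurable f (volume.restrict s)) (c : ℝ) :
    volume {p : ℝ × ℝ | p.2 ∈ s ∧ c ≤ p.1 ∧ p.1 < f p.2} = ∫⁻ y in s, ENNReal.ofReal (f y - c) := by
  have hline : volume {p : ℝ × ℝ | p.2 = c} = 0 := by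
    rw [show {p : ℝ × ℝ | p.2 = c} = univ ×ˢ {c} by ext; simp, Measure.volume_eq_prod,
      Measure.prod_prod, Real.volume_singleton, mul_zero]
  have hregion : volume {p : ℝ × ℝ | p.1 ∈ s ∧ c ≤ p.2 ∧ p.2 < f p.1} =
      volume (regionBetween (fun _ => c) f s) := by
    refine le_antisymm ?_ (measure_mono fun p hp => ⟨hp.1, Ioo_subset_Ico_self hp.2⟩)
    calc _ ≤ volume (regionBetween (fun _ => c) f s ∪ {p : ℝ × ℝ | p.2 = c}) :=
          measure_mono <| by
            rintro p ⟨hps, hpc, hpf⟩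
            exact hpc.eq_or_lt.elim (fun h => Or.inr h.symm) fun h => Or.inl ⟨hps, h, hpf⟩
      _ ≤ _ := (measure_union_le _ _).trans (by rw [hline, add_zero])
  have hswap : MeasurePreserving (Prod.swap : ℝ × ℝ → ℝ × ℝ) :=
    Measure.volume_eq_prod ℝ ℝ ▸ Measure.measurePreserving_swap
  calc _ = volume (Prod.swap ⁻¹' {p : ℝ × ℝ | p.1 ∈ s ∧ c ≤ p.2 ∧ p.2 < f p.1}) := rfl
    _ = _ := by
      rw [hswap.measure_preimage_emb MeasurableEquiv.prodComm.measurableEmbedding, hregion,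
        Measure.volume_eq_prod, volume_regionBetween_eq_lintegral aemeasurable_const hf hs]
      rfl

def trawlSet (b : ℝ) (d : ℝ → ℝ) (t : ℝ) : Set (ℝ × ℝ) :=
  {p | p.2 ≤ t ∧ b ≤ p.1 ∧ p.1 < d (p.2 - t)}

section Trawl

variable {b : ℝ} {d : ℝ → ℝ} {t : ℝ}

theorem trawlSet_inter_trawlSet_zero (hd : MonotoneOn d (Iic 0)) (ht : 0 ≤ t) :
    trawlSet b d t ∩ trawlSet b d 0 =
      (fun p => (0, -t) + p) ⁻¹' {p | p.2 ∈ Iic (-t) ∧ b ≤ p.1 ∧ p.1 < d p.2} := by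
  ext ⟨x, s⟩
  simp only [trawlSet, mem_inter_iff, mem_ofPred_eq, mem_preimage, Prod.mk_add_mk, zero_add,
    mem_Iic, sub_zero, neg_add_eq_sub]
  constructor
  · rintro ⟨⟨-, hbx, hxd⟩, hs, -⟩
    exact ⟨by linarith, hbx, hxd⟩
  · rintro ⟨hs, hbx, hxd⟩
    have hs : s ≤ 0 := by linarith
    exact ⟨⟨by linarith, hbx, hxd⟩, hs, hbx,
      hxd.trans_le (hd (mem_Iic.2 (by linarith)) hs (by linarith))⟩

theorem volume_trawlSet_inter_trawlSet_zero (hd : MonotoneOn d (Iic 0))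
    (hdb : ∀ s ≤ 0, b ≤ d s) (hint : IntegrableOn (fun s => d s - b) (Iic 0)) (ht : 0 ≤ t) :
    volume (trawlSet b d t ∩ trawlSet b d 0) = ENNReal.ofReal (∫ u in Iic (-t), (d u - b)) := by
  have hint' : IntegrableOn (fun s => d s - b) (Iic (-t)) :=
    hint.mono_set (Iic_subset_Iic.2 (neg_nonpos.2 ht))
  have hmeas : AEMeasurable d (volume.restrict (Iic (-t))) := by
    simpa using hint'.aemeasurable.add_const b
  rw [trawlSet_inter_trawlSet_zero hd ht, measure_preimage_add,
    volume_setOf_snd_mem_le_fst_lt measurableSet_Iic hmeas,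
    ofReal_integral_eq_lintegral_ofReal hint']
  exact (ae_restrict_iff' measurableSet_Iic).2 <| .of_forall fun u hu =>
    sub_nonneg.2 (hdb u (hu.trans (neg_nonpos.2 ht)))

end Trawl

theorem trawl_overlap_area_convexOn_general
    (b : ℝ) (d : ℝ → ℝ)
    (hd_mono : MonotoneOn d (Set.Iic 0))
    (hd_range : ∀ s ≤ (0:ℝ), d s ∈ Set.Icc b 1)
    (hd_int : MeasureTheory.IntegrableOn (fun s => d s - b) (Set.Iic 0))
    (A : ℝ → Set (ℝ × ℝ))
    (hA : ∀ t, A t = {p : ℝ × ℝ | p.2 ≤ t ∧ b ≤ p.1 ∧ p.1 < d (p.2 - t)}) :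
    ConvexOn ℝ (Set.Ici 0) (fun t => (volume (A t ∩ A 0)).toReal) ∧
    (StrictMonoOn d (Set.Iic 0) →
      StrictConvexOn ℝ (Set.Ici 0) (fun t => (volume (A t ∩ A 0)).toReal)) := by
  obtain rfl : A = trawlSet b d := funext hA
  set g : ℝ → ℝ := fun u => -(d (-u) - b)
  have hdb : ∀ s ≤ 0, b ≤ d s := fun s hs => (hd_range s hs).1
  have harea : EqOn (fun t => (∫ u in 0..t, g u) + ∫ u in Iic 0, (d u - b))
      (fun t => (volume (trawlSet b d t ∩ trawlSet b d 0)).toReal) (Ici 0) := fun t ht => by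
    dsimp only
    rw [volume_trawlSet_inter_trawlSet_zero hd_mono hdb hd_int ht,
      ENNReal.toReal_ofReal (setIntegral_nonneg measurableSet_Iic fun u hu =>
        sub_nonneg.2 (hdb u (mem_Iic.1 hu |>.trans (neg_nonpos.2 ht)))),
      setIntegral_Iic_neg_eq_sub hd_int ht, intervalIntegral.integral_neg]
    ring
  have hg : MonotoneOn g (Ici 0) := fun u hu v hv huv =>
    neg_le_neg <| sub_le_sub_right
      (hd_mono (mem_Iic.2 (neg_nonpos.2 hv)) (mem_Iic.2 (neg_nonpos.2 hu)) (neg_le_neg huv)) b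
  refine ⟨((hg.convexOn_intervalIntegral ordConnected_Ici self_mem_Ici).add_const _).congr harea,
    fun hd_strict => ?_⟩
  have hg_strict : StrictMonoOn g (Ici 0) := fun u hu v hv huv =>
    neg_lt_neg <| sub_lt_sub_right
      (hd_strict (mem_Iic.2 (neg_nonpos.2 hv)) (mem_Iic.2 (neg_nonpos.2 hu)) (neg_lt_neg huv)) b
  exact ((hg_strict.strictConvexOn_intervalIntegral ordConnected_Ici self_mem_Ici).add_const _).congr
    harea

/-- The overlap-area function `g(t) = leb(A_t ∩ A)` is convex on `[0, ∞)`;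
moreover, if `d` is strictly increasing on `(-∞, 0]`, then `g` is strictly convex on
`[0, ∞)`. -/
theorem trawl_overlap_area_convexOn
    (b : ℝ) (hb : b ∈ Set.Icc (0:ℝ) 1)
    (d : ℝ → ℝ)
    (hd_cont : ContinuousOn d (Set.Iic 0))
    (hd_mono : MonotoneOn d (Set.Iic 0))
    (hd_range : ∀ s ≤ (0:ℝ), d s ∈ Set.Icc b 1)
    (hd0 : d 0 = 1)
    (hd_lim : Filter.Tendsto d Filter.atBot (nhds b))
    (hd_int : MeasureTheory.IntegrableOn (fun s => d s - b) (Set.Iic 0))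
    (A : ℝ → Set (ℝ × ℝ))
    (hA : ∀ t, A t = {p : ℝ × ℝ | p.2 ≤ t ∧ b ≤ p.1 ∧ p.1 < d (p.2 - t)}) :
    ConvexOn ℝ (Set.Ici 0) (fun t => (volume (A t ∩ A 0)).toReal) ∧
    (StrictMonoOn d (Set.Iic 0) →
      StrictConvexOn ℝ (Set.Ici 0) (fun t => (volume (A t ∩ A 0)).toReal)) :=
  trawl_overlap_area_convexOn_general b d hd_mono hd_range hd_int A hA
end

section
/- For the sup-Γ trawl function d(s) := b + (1−b)·(1 − s/α)^{−H} with α > 0, H > 1 and b ∈ [0,1], the associated squashed trawl A satisfies leb(A) = (1 − b)·α/(H − 1) and, for every t ≥ 0, leb(A_t ∩ A) = ((1 − b)·α/(H − 1))·(1 + t/α)^{1−H}. -/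
/-!
Since `d` is increasing on `(-∞, 0]`, `A_t ∩ A` is the region `{s ≤ 0, b ≤ x < d (s - t)}`;
slicing at fixed `s` gives `leb (A_t ∩ A) = ∫_{-∞}^0 (d (s - t) - b) ds`. The integrand
`(1 - b) (1 + t/α - s/α)^{-H}` has the antiderivative `(1 - b) α/(H-1) (1 + t/α - s/α)^{1-H}`,
which vanishes at `-∞` because `H > 1`. The area of `A` is the case `t = 0`.
-/

open MeasureTheory Set Filter Topology

theorem integrableOn_Iic_deriv_of_nonneg' {g g' : ℝ → ℝ} {a l : ℝ}
    (hderiv : ∀ x ∈ Iic a, HasDerivAt g (g' x) x) (g'pos : ∀ x ∈ Iio a, 0 ≤ g' x)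
    (hg : Tendsto g atBot (𝓝 l)) : IntegrableOn g' (Iic a) := by
  have hneg : IntegrableOn (fun x => g' (-x)) (Ioi (-a)) := by
    refine integrableOn_Ioi_deriv_of_nonneg' (g := fun x => -g (-x)) (l := -l) (fun x hx => ?_)
      (fun x hx => g'pos _ (neg_lt.mp (mem_Ioi.mp hx))) ((hg.comp tendsto_neg_atTop_atBot).neg)
    simpa [Function.comp_def, Pi.neg_def] using
      ((hderiv (-x) (neg_le.mp (mem_Ici.mp hx))).comp x (hasDerivAt_neg x)).neg
  rw [integrableOn_Iic_iff_integrableOn_Iio]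
  simpa using hneg.comp_neg_Iio

section AffineRpow

variable {α H c : ℝ}

theorem hasDerivAt_sub_div_rpow (hα : α ≠ 0) (hH : H ≠ 1) {s : ℝ} (hs : 0 < c - s / α) :
    HasDerivAt (fun s => α / (H - 1) * (c - s / α) ^ (1 - H)) ((c - s / α) ^ (-H)) s := by
  have hlin : HasDerivAt (fun s : ℝ => c - s / α) (-(1 / α)) s := by
    simpa using ((hasDerivAt_id s).div_const α).const_sub c
  refine ((hlin.rpow_const (p := 1 - H) (Or.inl hs.ne')).const_mul (α / (H - 1))).congr_deriv ?_
  rw [show 1 - H - 1 = -H by ring]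
  field_simp [sub_ne_zero.mpr hH]
  ring

theorem tendsto_sub_div_rpow_atBot (hα : 0 < α) (hH : 1 < H) :
    Tendsto (fun s => (c - s / α) ^ (1 - H)) atBot (𝓝 0) := by
  have hlin : Tendsto (fun s : ℝ => c - s / α) atBot atTop :=
    tendsto_atTop_add_const_left atBot c (tendsto_neg_atBot_atTop.comp
      (tendsto_id.atBot_div_const hα)) |>.congr fun s => (sub_eq_add_neg c (s / α)).symm
  rw [show 1 - H = -(H - 1) by ring]
  exact (tendsto_rpow_neg_atTop (sub_pos.mpr hH)).comp hlin

theorem lintegral_Iic_sub_div_rpow (hα : 0 < α) (hH : 1 < H) {a : ℝ} (ha : 0 < c - a / α) :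
    ∫⁻ s in Iic a, ENNReal.ofReal ((c - s / α) ^ (-H))
      = ENNReal.ofReal (α / (H - 1) * (c - a / α) ^ (1 - H)) := by
  have hpos : ∀ s ∈ Iic a, 0 < c - s / α := fun s hs => by
    have : s / α ≤ a / α := div_le_div_of_nonneg_right hs hα.le
    linarith
  have hderiv : ∀ s ∈ Iic a, HasDerivAt (fun s => α / (H - 1) * (c - s / α) ^ (1 - H))
      ((c - s / α) ^ (-H)) s := fun s hs => hasDerivAt_sub_div_rpow hα.ne' hH.ne' (hpos s hs)
  have hlim : Tendsto (fun s => α / (H - 1) * (c - s / α) ^ (1 - H)) atBot (𝓝 0) := by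
    simpa using (tendsto_sub_div_rpow_atBot (c := c) hα hH).const_mul (α / (H - 1))
  have hint := integrableOn_Iic_deriv_of_nonneg' hderiv
    (fun s hs => (Real.rpow_pos_of_pos (hpos s (mem_Iic.mpr hs.le)) _).le) hlim
  rw [← ofReal_integral_eq_lintegral_ofReal hint,
    integral_Iic_of_hasDerivAt_of_tendsto' hderiv hint hlim, sub_zero]
  exact (ae_restrict_iff' measurableSet_Iic).2 (ae_of_all _ fun s hs =>
    (Real.rpow_pos_of_pos (hpos s hs) _).le)

end AffineRpow

theorem volume_setOf_mem_le_lt {S : Set ℝ} (hS : MeasurableSet S) (a : ℝ) {u : ℝ → ℝ}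
    (hu : Measurable u) :
    volume {p : ℝ × ℝ | p.2 ∈ S ∧ a ≤ p.1 ∧ p.1 < u p.2}
      = ∫⁻ y in S, ENNReal.ofReal (u y - a) := by
  have hm : MeasurableSet {p : ℝ × ℝ | p.2 ∈ S ∧ a ≤ p.1 ∧ p.1 < u p.2} :=
    (measurable_snd hS).inter ((measurableSet_le measurable_const measurable_fst).inter
      (measurableSet_lt measurable_fst (hu.comp measurable_snd)))
  rw [Measure.volume_eq_prod, Measure.prod_apply_symm hm, ← lintegral_indicator hS]
  refine lintegral_congr fun y => ?_
  by_cases hy : y ∈ S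
  · simp [hy, ← Real.volume_Ico, Ico_def]
  · simp [hy]

def squashedTrawl (b : ℝ) (d : ℝ → ℝ) (t : ℝ) : Set (ℝ × ℝ) :=
  {p | p.2 ≤ t ∧ b ≤ p.1 ∧ p.1 < d (p.2 - t)}

theorem squashedTrawl_inter_zero {b : ℝ} {d : ℝ → ℝ} (hd : MonotoneOn d (Iic 0)) {t : ℝ}
    (ht : 0 ≤ t) :
    squashedTrawl b d t ∩ squashedTrawl b d 0
      = {p | p.2 ∈ Iic 0 ∧ b ≤ p.1 ∧ p.1 < d (p.2 - t)} := by
  ext ⟨x, s⟩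
  simp only [squashedTrawl, mem_inter_iff, mem_ofPred_eq, mem_Iic, sub_zero]
  constructor
  · rintro ⟨⟨-, hbx, hx⟩, hs, -⟩
    exact ⟨hs, hbx, hx⟩
  · rintro ⟨hs, hbx, hx⟩
    have hst : s - t ≤ s := sub_le_self s ht
    exact ⟨⟨hs.trans ht, hbx, hx⟩, hs, hbx,
      hx.trans_le (hd (mem_Iic.mpr (hst.trans hs)) (mem_Iic.mpr hs) hst)⟩

theorem volume_squashedTrawl_inter_zero {b : ℝ} {d : ℝ → ℝ} (hdm : Measurable d)
    (hd : MonotoneOn d (Iic 0)) {t : ℝ} (ht : 0 ≤ t) :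
    volume (squashedTrawl b d t ∩ squashedTrawl b d 0)
      = ∫⁻ s in Iic 0, ENNReal.ofReal (d (s - t) - b) := by
  rw [squashedTrawl_inter_zero hd ht]
  exact volume_setOf_mem_le_lt measurableSet_Iic b (hdm.comp (measurable_id.sub_const t))

noncomputable def supGamma (b α H : ℝ) (s : ℝ) : ℝ := b + (1 - b) * (1 - s / α) ^ (-H)

section SupGamma

variable {b α H : ℝ}

theorem measurable_supGamma : Measurable (supGamma b α H) := by
  unfold supGamma
  fun_prop

theorem monotoneOn_supGamma (hb : b ≤ 1) (hα : 0 < α) (hH : 0 ≤ H) :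
    MonotoneOn (supGamma b α H) (Iic 0) := by
  intro s _ s' hs' hss'
  have hpos : 0 < 1 - s' / α := by
    have : s' / α ≤ 0 := div_nonpos_of_nonpos_of_nonneg hs' hα.le
    linarith
  have hle : 1 - s' / α ≤ 1 - s / α := by
    have : s / α ≤ s' / α := div_le_div_of_nonneg_right hss' hα.le
    linarith
  have := Real.rpow_le_rpow_of_nonpos hpos hle (neg_nonpos.mpr hH)
  unfold supGamma
  gcongr

end SupGamma

theorem volume_squashedTrawl_supGamma_inter_zero {b α H : ℝ} (hb : b ≤ 1) (hα : 0 < α)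
    (hH : 1 < H) {t : ℝ} (ht : 0 ≤ t) :
    volume (squashedTrawl b (supGamma b α H) t ∩ squashedTrawl b (supGamma b α H) 0)
      = ENNReal.ofReal ((1 - b) * α / (H - 1) * (1 + t / α) ^ (1 - H)) := by
  have hb' : 0 ≤ 1 - b := sub_nonneg.mpr hb
  have hshift : ∀ s, supGamma b α H (s - t) - b = (1 - b) * ((1 + t / α) - s / α) ^ (-H) :=
    fun s => by simp only [supGamma]; ring_nf
  have hc : 0 < (1 + t / α) - 0 / α := by
    rw [zero_div, sub_zero]
    positivity
  rw [volume_squashedTrawl_inter_zero measurable_supGamma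
    (monotoneOn_supGamma hb hα (zero_le_one.trans hH.le)) ht]
  simp_rw [hshift, ENNReal.ofReal_mul hb']
  rw [lintegral_const_mul' _ _ ENNReal.ofReal_ne_top, lintegral_Iic_sub_div_rpow hα hH hc,
    ← ENNReal.ofReal_mul hb']
  congr 1
  simp only [zero_div, sub_zero]
  ring

/-- For the sup-Γ trawl function `d(s) = b + (1−b)·(1 − s/α)^{−H}` with
`α > 0`, `H > 1` and `b ∈ [0,1]`, the squashed trawl `A` satisfies
`leb(A) = (1 − b)·α/(H − 1)` and, for every `t ≥ 0`,
`leb(A_t ∩ A) = ((1 − b)·α/(H − 1))·(1 + t/α)^{1−H}`. -/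
theorem supGamma_trawl_areas
    (b α H : ℝ) (hb : b ∈ Set.Icc (0:ℝ) 1) (hα : 0 < α) (hH : 1 < H)
    (d : ℝ → ℝ)
    (hd : ∀ s : ℝ, d s = b + (1 - b) * (1 - s / α) ^ (-H))
    (A : ℝ → Set (ℝ × ℝ))
    (hA : ∀ t, A t = {p : ℝ × ℝ | p.2 ≤ t ∧ b ≤ p.1 ∧ p.1 < d (p.2 - t)}) :
    volume (A 0) = ENNReal.ofReal ((1 - b) * α / (H - 1)) ∧
    ∀ t ≥ (0:ℝ),
      volume (A t ∩ A 0)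
        = ENNReal.ofReal ((1 - b) * α / (H - 1) * (1 + t / α) ^ (1 - H)) := by
  obtain rfl : d = supGamma b α H := funext hd
  obtain rfl : A = squashedTrawl b (supGamma b α H) := funext hA
  have hinter := fun t (ht : 0 ≤ t) => volume_squashedTrawl_supGamma_inter_zero hb.2 hα hH ht
  refine ⟨?_, hinter⟩
  simpa using hinter 0 le_rfl
end
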